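/- arXiv:1603.08179 — 12 statements merged into one kernel-verified Lean document; each statement's English description precedes it below -/
import Mathlib

section
/- Let u, v : ℤ/Tℤ → Fin N with N ≥ 2, and suppose there exists l with 1 ≤ l ≤ T such that for every shift τ ∈ [0,T) and every channel k ∈ Fin N there exists i < l with u(i) = k and v(i+τ) = k (all indices mod T). Then l ≥ N². -/
theorem mcttr_lower_bound
    (N T l : ℕ) (hN : 2 ≤ N) (hl1 : 1 ≤ l) (hlT : l ≤ T)
    (u v : ZMod T → Fin N)
    (hren : ∀ τ < T, ∀ k : Fin N,
      ∃ i < l, u (i : ZMod T) = k ∧ v ((i + τ : ℕ) : ZMod T) = k) :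
    N ^ 2 ≤ l := by
  classical
  have hT : 0 < T := lt_of_lt_of_le hl1 hlT
  haveI : NeZero T := ⟨hT.ne'⟩
  set S : Fin N → Finset ℕ :=
    fun k => (Finset.range l).filter (fun i => u (i : ZMod T) = k) with hS
  set V : Fin N → Finset (ZMod T) :=
    fun k => Finset.univ.filter (fun j => v j = k) with hV
  -- key counting lemma: T ≤ |S k| * |V k|
  have key : ∀ k : Fin N, T ≤ (S k).card * (V k).card := by
    intro k
    choose f hf1 hf2 hf3 using fun τ (hτ : τ < T) => hren τ hτ k
    have hcard : (Finset.range T).card ≤ ((S k) ×ˢ (V k)).card := by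
      apply Finset.card_le_card_of_injOn
        (fun τ => if h : τ < T then (f τ h, ((f τ h + τ : ℕ) : ZMod T)) else (0, 0))
      · intro τ hτ
        rw [Finset.mem_coe, Finset.mem_range] at hτ
        simp only [dif_pos hτ, Finset.mem_coe, Finset.mem_product]
        constructor
        · simp only [hS, Finset.mem_filter, Finset.mem_range]
          exact ⟨hf1 τ hτ, hf2 τ hτ⟩
        · simp only [hV, Finset.mem_filter, Finset.mem_univ, true_and]
          exact hf3 τ hτ
      · intro τ₁ h1 τ₂ h2 heq
        rw [Finset.mem_coe, Finset.mem_range] at h1 h2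
        simp only [dif_pos h1, dif_pos h2, Prod.mk.injEq] at heq
        obtain ⟨hi, hj⟩ := heq
        have : ((τ₁ : ℕ) : ZMod T) = ((τ₂ : ℕ) : ZMod T) := by
          push_cast at hj
          rw [hi] at hj
          exact add_left_cancel hj
        calc τ₁ = ((τ₁ : ℕ) : ZMod T).val := (ZMod.val_cast_of_lt h1).symm
          _ = ((τ₂ : ℕ) : ZMod T).val := by rw [this]
          _ = τ₂ := ZMod.val_cast_of_lt h2
    simpa [Finset.card_product] using hcard
  have hSsum : ∑ k : Fin N, (S k).card = l := by
    rw [← Finset.card_range l]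
    exact (Finset.card_eq_sum_card_fiberwise
      (f := fun i : ℕ => u (i : ZMod T)) (s := Finset.range l) (t := Finset.univ)
      (fun i _ => Finset.mem_univ (u (i : ZMod T)))).symm
  have hVsum : ∑ k : Fin N, (V k).card = T := by
    have := Finset.card_eq_sum_card_fiberwise
      (f := v) (s := (Finset.univ : Finset (ZMod T))) (t := Finset.univ)
      (fun j _ => Finset.mem_univ (v j))
    rw [Finset.card_univ, ZMod.card] at this
    exact this.symm
  -- real-valued Cauchy-Schwarz
  set a : Fin N → ℝ := fun k => ((S k).card : ℝ) with ha
  set b : Fin N → ℝ := fun k => ((V k).card : ℝ) with hb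
  have hann : ∀ k, 0 ≤ a k := fun k => Nat.cast_nonneg _
  have hbnn : ∀ k, 0 ≤ b k := fun k => Nat.cast_nonneg _
  have h1 : ∀ k, (T : ℝ) ≤ a k * b k := by
    intro k
    have := key k
    have : ((T : ℕ) : ℝ) ≤ (((S k).card * (V k).card : ℕ) : ℝ) := Nat.cast_le.mpr this
    simpa [ha, hb] using this
  have cs := Finset.sum_mul_sq_le_sq_mul_sq Finset.univ
    (fun k => Real.sqrt (a k)) (fun k => Real.sqrt (b k))
  have hsa : ∑ k : Fin N, Real.sqrt (a k) ^ 2 = (l : ℝ) := by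
    have : ∀ k : Fin N, Real.sqrt (a k) ^ 2 = a k := fun k => Real.sq_sqrt (hann k)
    rw [Finset.sum_congr rfl (fun k _ => this k)]
    rw [ha]
    push_cast [← hSsum]
    rfl
  have hsb : ∑ k : Fin N, Real.sqrt (b k) ^ 2 = (T : ℝ) := by
    have : ∀ k : Fin N, Real.sqrt (b k) ^ 2 = b k := fun k => Real.sq_sqrt (hbnn k)
    rw [Finset.sum_congr rfl (fun k _ => this k)]
    rw [hb]
    push_cast [← hVsum]
    rfl
  have hlow : (N : ℝ) * Real.sqrt T ≤ ∑ k : Fin N, Real.sqrt (a k) * Real.sqrt (b k) := by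
    have : ∀ k : Fin N, Real.sqrt T ≤ Real.sqrt (a k) * Real.sqrt (b k) := by
      intro k
      rw [← Real.sqrt_mul (hann k)]
      exact Real.sqrt_le_sqrt (h1 k)
    calc (N : ℝ) * Real.sqrt T = ∑ _k : Fin N, Real.sqrt T := by
            simp [Finset.sum_const, mul_comm]
      _ ≤ _ := Finset.sum_le_sum (fun k _ => this k)
  have hNT : (N : ℝ) ^ 2 * T ≤ (l : ℝ) * T := by
    have h2 : ((N : ℝ) * Real.sqrt T) ^ 2 ≤ (l : ℝ) * T := by
      calc ((N : ℝ) * Real.sqrt T) ^ 2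
          ≤ (∑ k : Fin N, Real.sqrt (a k) * Real.sqrt (b k)) ^ 2 := by
            apply pow_le_pow_left₀ (by positivity) hlow
        _ ≤ (∑ k : Fin N, Real.sqrt (a k) ^ 2) * ∑ k : Fin N, Real.sqrt (b k) ^ 2 := cs
        _ = (l : ℝ) * T := by rw [hsa, hsb]
    calc (N : ℝ) ^ 2 * T = ((N : ℝ) * Real.sqrt T) ^ 2 := by
          rw [mul_pow, Real.sq_sqrt (by positivity)]
      _ ≤ (l : ℝ) * T := h2
  have hTpos : (0 : ℝ) < T := by exact_mod_cast hT
  have : (N : ℝ) ^ 2 ≤ (l : ℝ) := le_of_mul_le_mul_right (by linarith [hNT]) hTpos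
  exact_mod_cast this
end

section
/- Let u, v : ℤ/Tℤ → Fin N with N ≥ 2, l = N², and suppose for every shift τ ∈ [0,T) and every channel k ∈ Fin N there exists i < N² with u(i) = k and v(i+τ) = k (indices mod T). Then the sequence v visits every channel with the same frequency over one period; i.e., for all channels k, k', |{j ∈ [0,T) : v(j) = k}| = |{j ∈ [0,T) : v(j) = k'}|. -/
private lemma pair_le {x y : ℚ} (hx : 0 < x) (hy : 0 < y) : 2 ≤ x / y + y / x := by
  rw [div_add_div _ _ hy.ne' hx.ne', le_div_iff₀ (by positivity)]
  nlinarith [sq_nonneg (x - y)]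

private lemma pair_lt {x y : ℚ} (hx : 0 < x) (hy : 0 < y) (hne : x ≠ y) :
    2 < x / y + y / x := by
  rw [div_add_div _ _ hy.ne' hx.ne', lt_div_iff₀ (by positivity)]
  have h : x - y ≠ 0 := sub_ne_zero.2 hne
  nlinarith [mul_self_pos.mpr h]

private lemma cauchy_strict {n : ℕ} (a : Fin n → ℚ) (ha : ∀ k, 0 < a k)
    (i j : Fin n) (hne : a i ≠ a j) :
    (n : ℚ) ^ 2 < (∑ k, a k) * (∑ k, (a k)⁻¹) := by
  have hprod : (∑ k, a k) * (∑ k, (a k)⁻¹) = ∑ p : Fin n × Fin n, a p.1 / a p.2 := by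
    rw [Finset.sum_mul_sum, ← Finset.sum_product']
    simp [div_eq_mul_inv]
  have hswap : ∑ p : Fin n × Fin n, a p.1 / a p.2
      = ∑ p : Fin n × Fin n, a p.2 / a p.1 :=
    Fintype.sum_equiv (Equiv.prodComm _ _) _ _ (fun p => rfl)
  have hlt : ∑ _p : Fin n × Fin n, (2 : ℚ) <
      ∑ p : Fin n × Fin n, (a p.1 / a p.2 + a p.2 / a p.1) :=
    Finset.sum_lt_sum (fun p _ => pair_le (ha p.1) (ha p.2))
      ⟨(i, j), Finset.mem_univ _, pair_lt (ha i) (ha j) hne⟩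
  have hsum2 : ∑ _p : Fin n × Fin n, (2 : ℚ) = 2 * (n : ℚ) ^ 2 := by
    simp [Finset.sum_const, Fintype.card_prod]
    ring
  have hsplit : ∑ p : Fin n × Fin n, (a p.1 / a p.2 + a p.2 / a p.1)
      = 2 * ((∑ k, a k) * (∑ k, (a k)⁻¹)) := by
    rw [Finset.sum_add_distrib, ← hswap, hprod]
    ring
  rw [hsum2, hsplit] at hlt
  linarith

theorem mcttr_min_implies_uniform_loading
    (N T : ℕ) (hN : 2 ≤ N) (hT : 0 < T)
    (u v : ZMod T → Fin N)
    (hren : ∀ τ < T, ∀ k : Fin N,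
      ∃ i < N ^ 2, u (i : ZMod T) = k ∧ v ((i + τ : ℕ) : ZMod T) = k) :
    ∀ k k' : Fin N,
      ((Finset.range T).filter (fun (j : ℕ) => v (j : ZMod T) = k)).card =
      ((Finset.range T).filter (fun (j : ℕ) => v (j : ZMod T) = k')).card := by
  classical
  set A : Fin N → Finset ℕ :=
    fun k => (Finset.range T).filter (fun j => v (j : ZMod T) = k) with hA
  set S : Fin N → Finset ℕ :=
    fun k => (Finset.range (N ^ 2)).filter (fun i => u (i : ZMod T) = k) with hS
  -- covering bound : T ≤ |S k| * |A k|
  have hcov : ∀ k : Fin N, T ≤ (S k).card * (A k).card := by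
    intro k
    have hch : ∀ τ : ℕ, ∃ i : ℕ, τ < T →
        i < N ^ 2 ∧ u (i : ZMod T) = k ∧ v (((i + τ : ℕ)) : ZMod T) = k := by
      intro τ
      by_cases hτ : τ < T
      · obtain ⟨i, h1, h2, h3⟩ := hren τ hτ k
        exact ⟨i, fun _ => ⟨h1, h2, h3⟩⟩
      · exact ⟨0, fun h => absurd h hτ⟩
    choose g hg using hch
    have hinj : Set.InjOn (fun τ => (g τ, (g τ + τ) % T)) (Finset.range T) := by
      intro τ1 h1 τ2 h2 heq
      simp only [Finset.coe_range, Set.mem_Iio] at h1 h2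
      have hg12 : g τ1 = g τ2 := congrArg Prod.fst heq
      have hm : (g τ1 + τ1) % T = (g τ1 + τ2) % T := by
        have := congrArg Prod.snd heq
        simpa [hg12] using this
      have hmm : τ1 % T = τ2 % T := Nat.ModEq.add_left_cancel' _ hm
      rwa [Nat.mod_eq_of_lt h1, Nat.mod_eq_of_lt h2] at hmm
    have hmaps : ∀ τ ∈ Finset.range T, (g τ, (g τ + τ) % T) ∈ S k ×ˢ A k := by
      intro τ hτ
      obtain ⟨h1, h2, h3⟩ := hg τ (Finset.mem_range.mp hτ)
      refine Finset.mem_product.mpr ⟨?_, ?_⟩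
      · exact Finset.mem_filter.mpr ⟨Finset.mem_range.mpr h1, h2⟩
      · refine Finset.mem_filter.mpr ⟨Finset.mem_range.mpr (Nat.mod_lt _ hT), ?_⟩
        rw [ZMod.natCast_mod]
        exact h3
    have hcard := Finset.card_le_card_of_injOn _ hmaps hinj
    simpa [Finset.card_product] using hcard
  -- fiberwise sums
  have hsumS : ∑ k : Fin N, (S k).card = N ^ 2 := by
    have := Finset.card_eq_sum_card_fiberwise
      (s := Finset.range (N ^ 2)) (t := Finset.univ)
      (f := fun i : ℕ => u (i : ZMod T)) (fun x _ => Finset.mem_univ _)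
    simpa [hS] using this.symm
  have hsumA : ∑ k : Fin N, (A k).card = T := by
    have := Finset.card_eq_sum_card_fiberwise
      (s := Finset.range T) (t := Finset.univ)
      (f := fun j : ℕ => v (j : ZMod T)) (fun x _ => Finset.mem_univ _)
    simpa [hA] using this.symm
  have hApos : ∀ k, 0 < (A k).card := by
    intro k
    rcases Nat.eq_zero_or_pos (A k).card with h | h
    · exfalso
      have := hcov k
      rw [h, Nat.mul_zero] at this
      omega
    · exact h
  intro k k'
  by_contra hne
  set a : Fin N → ℚ := fun k => ((A k).card : ℚ) with ha
  have hq : ∀ k, (0 : ℚ) < a k := fun k => by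
    simp only [ha]; exact_mod_cast hApos k
  have hne' : (A k).card ≠ (A k').card := hne
  have hdiff : a k ≠ a k' := fun h => hne' (by simp only [ha] at h; exact_mod_cast h)
  have hsa : ∑ k, a k = (T : ℚ) := by
    simp only [ha]; exact_mod_cast hsumA
  have hk : ∀ k, (T : ℚ) * (a k)⁻¹ ≤ ((S k).card : ℚ) := by
    intro k
    rw [← div_eq_mul_inv, div_le_iff₀ (hq k)]
    simp only [ha]
    exact_mod_cast hcov k
  have hle : (∑ k, a k) * (∑ k, (a k)⁻¹) ≤ (N : ℚ) ^ 2 := by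
    rw [hsa, Finset.mul_sum]
    calc ∑ k, (T : ℚ) * (a k)⁻¹ ≤ ∑ k, ((S k).card : ℚ) :=
          Finset.sum_le_sum (fun k _ => hk k)
      _ = (N : ℚ) ^ 2 := by exact_mod_cast hsumS
  have hstrict := cauchy_strict a hq k k' hdiff
  linarith
end

section
/- Let u, v : ℤ/Tℤ → Fin N with N ≥ 2 satisfy: for every τ ∈ [0,T) and every k ∈ Fin N there exists i < N² with u(i) = k and v(i+τ) = k, and symmetrically for every τ' and k there exists i < N² with v(i) = k and u(i+τ') = k. Then u is not equal to any cyclic shift of v; i.e., there is no τ ∈ [0,T) such that u(i) = v(i+τ) for all i. -/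
theorem mcttr_min_implies_distinct
    (N T : ℕ) (hN : 2 ≤ N) (hT : 0 < T)
    (u v : ZMod T → Fin N)
    (hren1 : ∀ τ < T, ∀ k : Fin N,
      ∃ i < N ^ 2, u (i : ZMod T) = k ∧ v ((i + τ : ℕ) : ZMod T) = k)
    (hren2 : ∀ τ' < T, ∀ k : Fin N,
      ∃ i < N ^ 2, v (i : ZMod T) = k ∧ u ((i + τ' : ℕ) : ZMod T) = k) :
    ¬ ∃ τ < T, ∀ i : ZMod T, u i = v (i + (τ : ZMod T)) := by
  classical
  rintro ⟨τ, hτ, heq⟩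
  haveI : NeZero T := ⟨hT.ne'⟩
  -- Self-rendezvous condition for u.
  have key : ∀ (s : ZMod T) (k : Fin N), ∃ i < N ^ 2,
      u (i : ZMod T) = k ∧ u ((i : ZMod T) + s) = k := by
    intro s k
    obtain ⟨i, hi, h1, h2⟩ := hren1 (s + τ).val (ZMod.val_lt _) k
    refine ⟨i, hi, h1, ?_⟩
    have hcast : ((i + (s + τ).val : ℕ) : ZMod T) = ((i : ZMod T) + s) + (τ : ZMod T) := by
      push_cast
      rw [ZMod.natCast_val, ZMod.cast_id]
      ring
    rw [heq ((i : ZMod T) + s), ← hcast]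
    exact h2
  set A : Fin N → Finset (ZMod T) := fun k => Finset.univ.filter (fun x => u x = k) with hA
  set B : Fin N → Finset (ZMod T) := fun k =>
    ((Finset.range (N ^ 2)).filter (fun i : ℕ => u (i : ZMod T) = k)).image
      (fun i : ℕ => (i : ZMod T)) with hB
  have hBA : ∀ k, B k ⊆ A k := by
    intro k x hx
    simp only [hB, Finset.mem_image, Finset.mem_filter, Finset.mem_range] at hx
    obtain ⟨i, ⟨_, hui⟩, rfl⟩ := hx
    simp [hA, hui]
  -- counting lemma : T - 1 ≤ |A k| * |B k| - |B k|
  have hcard1 : ∀ k, T - 1 ≤ (A k).card * (B k).card - (B k).card := by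
    intro k
    have hkey' : ∀ s : ZMod T, ∃ i : ℕ,
        i < N ^ 2 ∧ u (i : ZMod T) = k ∧ u ((i : ZMod T) + s) = k := by
      intro s; obtain ⟨i, hi, h1, h2⟩ := key s k; exact ⟨i, hi, h1, h2⟩
    set c : ZMod T → ℕ := fun s => (hkey' s).choose with hc
    set g : ZMod T → ZMod T × ZMod T :=
      fun s => (((c s : ℕ) : ZMod T) + s, ((c s : ℕ) : ZMod T)) with hg
    set P : Finset (ZMod T × ZMod T) :=
      (A k ×ˢ B k).filter (fun p => p.1 ≠ p.2) with hP
    have hmem : ∀ s ∈ Finset.univ.erase (0 : ZMod T), g s ∈ P := by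
      intro s hs
      obtain ⟨hlt, h1, h2⟩ := (hkey' s).choose_spec
      have hs0 : s ≠ 0 := (Finset.mem_erase.mp hs).1
      simp only [hP, Finset.mem_filter, Finset.mem_product]
      refine ⟨⟨?_, ?_⟩, ?_⟩
      · simp [hA, hg, hc, h2]
      · show ((c s : ℕ) : ZMod T) ∈ B k
        exact Finset.mem_image_of_mem _
          (Finset.mem_filter.mpr ⟨Finset.mem_range.mpr hlt, h1⟩)
      · simp only [hg, ne_eq]
        intro hcontra
        apply hs0
        have h0 : ((c s : ℕ) : ZMod T) + s = ((c s : ℕ) : ZMod T) + 0 := by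
          simpa using hcontra
        exact add_left_cancel h0
    have hinj : Set.InjOn g (Finset.univ.erase (0 : ZMod T)) := by
      intro s _ s' _ hss
      have : (g s).1 - (g s).2 = (g s').1 - (g s').2 := by rw [hss]
      simpa [hg] using this
    have h1 : (Finset.univ.erase (0 : ZMod T)).card ≤ P.card :=
      Finset.card_le_card_of_injOn g hmem hinj
    have herase : (Finset.univ.erase (0 : ZMod T)).card = T - 1 := by
      rw [Finset.card_erase_of_mem (Finset.mem_univ _), Finset.card_univ, ZMod.card]
    have hD : ((B k).image (fun b => (b, b))) ⊆ A k ×ˢ B k := by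
      intro p hp
      simp only [Finset.mem_image] at hp
      obtain ⟨b, hb, rfl⟩ := hp
      exact Finset.mem_product.mpr ⟨hBA k hb, hb⟩
    have hPD : P ⊆ (A k ×ˢ B k) \ ((B k).image (fun b => (b, b))) := by
      intro p hp
      simp only [hP, Finset.mem_filter] at hp
      refine Finset.mem_sdiff.mpr ⟨hp.1, ?_⟩
      simp only [Finset.mem_image, not_exists]
      rintro b ⟨hb, hbp⟩
      exact hp.2 (by rw [← hbp])
    have hDcard : ((B k).image (fun b => (b, b))).card = (B k).card :=
      Finset.card_image_of_injective _ (fun a b h => by simpa using congrArg Prod.fst h)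
    have h2 : P.card ≤ (A k).card * (B k).card - (B k).card := by
      calc P.card ≤ ((A k ×ˢ B k) \ ((B k).image (fun b => (b, b)))).card :=
            Finset.card_le_card hPD
        _ = (A k ×ˢ B k).card - ((B k).image (fun b => (b, b))).card :=
            Finset.card_sdiff_of_subset hD
        _ = (A k).card * (B k).card - (B k).card := by rw [Finset.card_product, hDcard]
    omega
  -- B k is nonempty
  have hBpos : ∀ k, 1 ≤ (B k).card := by
    intro k
    obtain ⟨i, hi, h1, _⟩ := key 0 k
    have : (i : ZMod T) ∈ B k :=
      Finset.mem_image_of_mem _ (Finset.mem_filter.mpr ⟨Finset.mem_range.mpr hi, h1⟩)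
    exact Finset.card_pos.mpr ⟨_, this⟩
  have hApos : ∀ k, 1 ≤ (A k).card := fun k =>
    le_trans (hBpos k) (Finset.card_le_card (hBA k))
  -- sums
  have hAsum : ∑ k, (A k).card = T := by
    have := Finset.card_eq_sum_card_fiberwise
      (f := u) (s := (Finset.univ : Finset (ZMod T))) (t := Finset.univ)
      (fun x _ => Finset.mem_univ _)
    rw [Finset.card_univ, ZMod.card] at this
    exact this.symm
  have hBsum : ∑ k, (B k).card ≤ N ^ 2 := by
    have h1 : ∀ k : Fin N, (B k).card ≤
        ((Finset.range (N ^ 2)).filter (fun i : ℕ => u (i : ZMod T) = k)).card :=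
      fun k => Finset.card_image_le
    calc ∑ k, (B k).card
        ≤ ∑ k, ((Finset.range (N ^ 2)).filter (fun i : ℕ => u (i : ZMod T) = k)).card :=
          Finset.sum_le_sum (fun k _ => h1 k)
      _ = (Finset.range (N ^ 2)).card := by
          exact (Finset.card_eq_sum_card_fiberwise
            (f := fun i : ℕ => u (i : ZMod T)) (s := Finset.range (N ^ 2))
            (t := Finset.univ) (fun x _ => Finset.mem_univ _)).symm
      _ = N ^ 2 := Finset.card_range _
  have hTN : N ≤ T := by
    calc N = ∑ _k : Fin N, 1 := by simp
      _ ≤ ∑ k, (A k).card := Finset.sum_le_sum (fun k _ => hApos k)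
      _ = T := hAsum
  -- pass to the reals
  set a : Fin N → ℝ := fun k => ((B k).card : ℝ) with ha
  set b : Fin N → ℝ := fun k => ((A k).card : ℝ) - 1 with hb'
  have ha0 : ∀ k, 0 ≤ a k := fun k => Nat.cast_nonneg _
  have hb0 : ∀ k, 0 ≤ b k := fun k => by
    have := hApos k; simp only [hb']
    have : (1 : ℝ) ≤ ((A k).card : ℝ) := by exact_mod_cast hApos k
    linarith
  have h1R : ∀ k, (T : ℝ) - 1 ≤ a k * b k := by
    intro k
    have h := hcard1 k
    have hBle : (B k).card ≤ (A k).card * (B k).card :=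
      Nat.le_mul_of_pos_left _ (hApos k)
    have hcast : ((T : ℝ)) - 1 ≤ ((A k).card : ℝ) * ((B k).card : ℝ) - ((B k).card : ℝ) := by
      have := (Nat.cast_le (α := ℝ)).mpr h
      rw [Nat.cast_sub hT, Nat.cast_sub hBle] at this
      push_cast at this ⊢
      linarith
    simp only [ha, hb']
    nlinarith [hcast]
  have hsa : ∑ k, a k ≤ (N : ℝ) ^ 2 := by
    simp only [ha]
    exact_mod_cast (by exact_mod_cast hBsum : (∑ k, ((B k).card : ℝ)) ≤ ((N ^ 2 : ℕ) : ℝ))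
  have hsb : ∑ k, b k = (T : ℝ) - N := by
    simp only [hb', Finset.sum_sub_distrib]
    have : (∑ k, ((A k).card : ℝ)) = (T : ℝ) := by exact_mod_cast hAsum
    rw [this]; simp
  -- Cauchy-Schwarz
  have hCS := Real.sum_sqrt_mul_sqrt_le (Finset.univ : Finset (Fin N)) ha0 hb0
  have hlow : (N : ℝ) * Real.sqrt ((T : ℝ) - 1) ≤ ∑ k, Real.sqrt (a k) * Real.sqrt (b k) := by
    have : ∀ k ∈ (Finset.univ : Finset (Fin N)),
        Real.sqrt ((T : ℝ) - 1) ≤ Real.sqrt (a k) * Real.sqrt (b k) := by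
      intro k _
      rw [← Real.sqrt_mul (ha0 k)]
      exact Real.sqrt_le_sqrt (h1R k)
    calc (N : ℝ) * Real.sqrt ((T : ℝ) - 1)
        = ∑ _k : Fin N, Real.sqrt ((T : ℝ) - 1) := by simp [mul_comm]
      _ ≤ _ := Finset.sum_le_sum this
  have hup : Real.sqrt (∑ k, a k) * Real.sqrt (∑ k, b k) ≤
      (N : ℝ) * Real.sqrt ((T : ℝ) - N) := by
    rw [hsb]
    have h1 : Real.sqrt (∑ k, a k) ≤ (N : ℝ) := by
      have : Real.sqrt (∑ k, a k) ≤ Real.sqrt ((N : ℝ) ^ 2) := Real.sqrt_le_sqrt hsa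
      rwa [Real.sqrt_sq (by positivity)] at this
    exact mul_le_mul_of_nonneg_right h1 (Real.sqrt_nonneg _)
  have hfinal : Real.sqrt ((T : ℝ) - 1) ≤ Real.sqrt ((T : ℝ) - N) := by
    have hNpos : (0 : ℝ) < N := by positivity
    have := le_trans (le_trans hlow hCS) hup
    exact le_of_mul_le_mul_left this hNpos
  have hT1 : (0 : ℝ) ≤ (T : ℝ) - 1 := by
    have : (1 : ℝ) ≤ (T : ℝ) := by exact_mod_cast hT
    linarith
  have hTNr : (0 : ℝ) ≤ (T : ℝ) - N := by
    have : (N : ℝ) ≤ (T : ℝ) := by exact_mod_cast hTN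
    linarith
  have hle := (Real.sqrt_le_sqrt_iff hTNr).mp hfinal
  have hN' : (2 : ℝ) ≤ (N : ℝ) := by exact_mod_cast hN
  linarith
end

section
/- Let u, v : ℤ/Tℤ → Fin N with N ≥ 2. Suppose (MCTTR = N²) for every τ ∈ [0,T) and every channel k there exists i < N² with u(i) = k and v(i+τ) = k, and suppose l with 1 ≤ l ≤ T satisfies (MTTR ≤ l): for every τ ∈ [0,T) there exists i < l with u(i) = v(i+τ). Then l ≥ N. -/
/-- Rigidity helper: if every value of `f` is at least `m` and the total equals
`card * m`, then every value equals `m`. -/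
lemma mttr_rigid {α : Type*} [Fintype α] (f : α → ℕ) (m : ℕ)
    (hle : ∀ k, m ≤ f k) (hsum : ∑ k, f k = Fintype.card α * m) (k : α) : f k = m := by
  by_contra h
  have h1 : m < f k := lt_of_le_of_ne (hle k) (Ne.symm h)
  have h2 : ∑ _j : α, m < ∑ j : α, f j :=
    Finset.sum_lt_sum (fun i _ => hle i) ⟨k, Finset.mem_univ k, h1⟩
  rw [Finset.sum_const, smul_eq_mul, Finset.card_univ, hsum] at h2
  omega

theorem mttr_lower_bound
    (N T l : ℕ) (hN : 2 ≤ N) (hl1 : 1 ≤ l) (hlT : l ≤ T)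
    (u v : ZMod T → Fin N)
    (hmcttr : ∀ τ < T, ∀ k : Fin N,
      ∃ i < N ^ 2, u (i : ZMod T) = k ∧ v ((i + τ : ℕ) : ZMod T) = k)
    (hmttr : ∀ τ < T, ∃ i < l, u (i : ZMod T) = v ((i + τ : ℕ) : ZMod T)) :
    N ≤ l := by
  have hT0 : 0 < T := by omega
  haveI : NeZero T := ⟨by omega⟩
  set A : Fin N → Finset ℕ :=
    fun k => (Finset.range (N ^ 2)).filter (fun i => u (i : ZMod T) = k) with hA
  set B : Fin N → Finset (ZMod T) :=
    fun k => Finset.univ.filter (fun j => v j = k) with hB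
  set a : Fin N → ℕ := fun k => (A k).card with ha
  set b : Fin N → ℕ := fun k => (B k).card with hb
  -- Lemma 1: T ≤ a k * b k
  have hab : ∀ k, T ≤ a k * b k := by
    intro k
    have hsurj : Set.SurjOn (fun p : ℕ × ZMod T => (p.2 - (p.1 : ZMod T)).val)
        (((A k) ×ˢ (B k) : Finset (ℕ × ZMod T)) : Set (ℕ × ZMod T)) (Finset.range T) := by
      intro τ hτ
      simp only [Finset.coe_range, Set.mem_Iio] at hτ
      obtain ⟨i, hi, hu, hv⟩ := hmcttr τ hτ k
      refine ⟨(i, ((i + τ : ℕ) : ZMod T)), ?_, ?_⟩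
      · simp only [Finset.coe_product, Set.mem_prod, Finset.mem_coe, hA, hB,
          Finset.mem_filter, Finset.mem_range, Finset.mem_univ]
        exact ⟨⟨hi, hu⟩, ⟨trivial, hv⟩⟩
      · show (((i + τ : ℕ) : ZMod T) - (i : ZMod T)).val = τ
        push_cast
        rw [add_sub_cancel_left]
        exact ZMod.val_natCast_of_lt hτ
    have h := Finset.card_le_card_of_surjOn _ hsurj
    simpa [Finset.card_product] using h
  -- Lemma 2: covering by the MTTR hypothesis
  have hcover : T ≤ ∑ i ∈ Finset.range l, b (u (i : ZMod T)) := by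
    have hsurj : Set.SurjOn (fun p : (_ : ℕ) × ZMod T => (p.2 - (p.1 : ZMod T)).val)
        ((Finset.range l).sigma (fun i => B (u (i : ZMod T)))) (Finset.range T) := by
      intro τ hτ
      simp only [Finset.coe_range, Set.mem_Iio] at hτ
      obtain ⟨i, hi, huv⟩ := hmttr τ hτ
      refine ⟨⟨i, ((i + τ : ℕ) : ZMod T)⟩, ?_, ?_⟩
      · simp only [Finset.mem_coe, Finset.mem_sigma, Finset.mem_range, hB,
          Finset.mem_filter, Finset.mem_univ]
        exact ⟨hi, trivial, huv.symm⟩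
      · show (((i + τ : ℕ) : ZMod T) - (i : ZMod T)).val = τ
        push_cast
        rw [add_sub_cancel_left]
        exact ZMod.val_natCast_of_lt hτ
    have h := Finset.card_le_card_of_surjOn _ hsurj
    simpa [Finset.card_sigma] using h
  -- totals
  have hsum_a : ∑ k, a k = N ^ 2 := by
    have h := Finset.card_eq_sum_card_fiberwise
      (f := fun i : ℕ => u (i : ZMod T)) (s := Finset.range (N ^ 2))
      (t := Finset.univ) (fun i _ => Finset.mem_univ _)
    simpa [ha, hA] using h.symm
  have hsum_b : ∑ k, b k = T := by
    have h := Finset.card_eq_sum_card_fiberwise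
      (f := v) (s := (Finset.univ : Finset (ZMod T)))
      (t := Finset.univ) (fun i _ => Finset.mem_univ _)
    have hc : (Finset.univ : Finset (ZMod T)).card = T := by
      rw [Finset.card_univ, ZMod.card]
    rw [hc] at h
    simpa [hb, hB] using h.symm
  have ha_pos : ∀ k, 0 < a k := by
    intro k
    rcases Nat.eq_zero_or_pos (a k) with h | h
    · have := hab k; rw [h, zero_mul] at this; omega
    · exact h
  -- Step (i): every a k is at least N
  have haN : ∀ k, N ≤ a k := by
    by_contra hcon
    push_neg at hcon
    obtain ⟨k0, hk0⟩ := hcon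
    have hN0 : (0:ℚ) ≤ N := by positivity
    have hN2 : (2:ℚ) ≤ N := by exact_mod_cast hN
    have hT1 : (1:ℚ) ≤ T := by exact_mod_cast hT0
    have hkey : ∀ k, (T:ℚ) * (2 * N - a k) * N ≤ (b k) * N ^ 3 := by
      intro k
      have h1 : (T:ℚ) ≤ a k * b k := by exact_mod_cast hab k
      have h2 : (0:ℚ) ≤ b k := Nat.cast_nonneg _
      have h3 : (0:ℚ) ≤ a k := Nat.cast_nonneg _
      rcases le_or_gt (a k : ℚ) (2 * N) with hc | hc
      · nlinarith [mul_nonneg (mul_nonneg hN0 h2) (sq_nonneg ((N:ℚ) - a k)),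
          mul_nonneg hN0 (mul_nonneg (sub_nonneg.2 h1) (sub_nonneg.2 hc))]
      · have hTQ : (0:ℚ) < T := by linarith
        have hNQ : (0:ℚ) < N := by linarith
        nlinarith [mul_nonneg h2 (pow_nonneg hN0 3),
          mul_pos (mul_pos hTQ hNQ) (sub_pos.2 hc)]
    have hkey0 : (T:ℚ) * (2 * N - a k0) * N + T ≤ (b k0) * N ^ 3 := by
      have h1 : (T:ℚ) ≤ a k0 * b k0 := by exact_mod_cast hab k0
      have h2 : (0:ℚ) ≤ b k0 := Nat.cast_nonneg _
      have ha1 : (1:ℚ) ≤ a k0 := by exact_mod_cast ha_pos k0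
      have ha2 : (a k0 : ℚ) + 1 ≤ N := by exact_mod_cast hk0
      have hd : (1:ℚ) ≤ (N:ℚ) - a k0 := by linarith
      have h0T : (0:ℚ) ≤ T := by linarith
      have key : 0 ≤ (a k0 : ℚ) * ((b k0) * N ^ 3 - ((T:ℚ) * (2 * N - a k0) * N + T)) := by
        nlinarith [mul_nonneg (sub_nonneg.2 h1) (pow_nonneg hN0 3),
          mul_nonneg (mul_nonneg (mul_nonneg h0T hN0)
            (by linarith : (0:ℚ) ≤ ((N:ℚ) - a k0) - 1))
            (by linarith : (0:ℚ) ≤ ((N:ℚ) - a k0) + 1),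
          mul_nonneg h0T (by linarith : (0:ℚ) ≤ (N:ℚ) - a k0)]
      have ha0 : (0:ℚ) < a k0 := by linarith
      have := (mul_nonneg_iff_of_pos_left ha0).mp key
      linarith
    have hsum_aQ : (∑ k, (a k : ℚ)) = (N:ℚ) ^ 2 := by
      rw [← Nat.cast_sum, hsum_a]; push_cast; ring
    have hsum_bQ : (∑ k, (b k : ℚ)) = (T:ℚ) := by
      rw [← Nat.cast_sum, hsum_b]
    have hs1 : ∑ k, ((b k : ℚ) * N ^ 3) = T * N ^ 3 := by
      rw [← Finset.sum_mul, hsum_bQ]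
    have hs2 : ∑ k, ((T:ℚ) * (2 * N - a k) * N) = T * N ^ 3 := by
      have : ∑ k, ((T:ℚ) * (2 * N - a k) * N)
          = (T * N) * ∑ k, (2 * (N:ℚ) - a k) := by
        rw [Finset.mul_sum]; apply Finset.sum_congr rfl; intro k _; ring
      rw [this, Finset.sum_sub_distrib, Finset.sum_const, hsum_aQ,
        Finset.card_univ, Fintype.card_fin]
      ring
    have e1 : ∑ x ∈ Finset.univ.erase k0, ((b x : ℚ) * N ^ 3) + (b k0 : ℚ) * N ^ 3
        = (T:ℚ) * N ^ 3 := by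
      rw [← hs1]; exact Finset.sum_erase_add _ _ (Finset.mem_univ k0)
    have e2 : ∑ x ∈ Finset.univ.erase k0, ((T:ℚ) * (2 * N - a x) * N)
        + (T:ℚ) * (2 * N - a k0) * N = (T:ℚ) * N ^ 3 := by
      rw [← hs2]; exact Finset.sum_erase_add _ _ (Finset.mem_univ k0)
    have hle : ∑ k ∈ Finset.univ.erase k0, ((T:ℚ) * (2 * N - a k) * N)
        ≤ ∑ k ∈ Finset.univ.erase k0, ((b k : ℚ) * N ^ 3) :=
      Finset.sum_le_sum (fun k _ => hkey k)
    linarith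
  -- rigidity: a k = N
  have ha_eq : ∀ k, a k = N := by
    apply mttr_rigid a N haN
    rw [hsum_a, Fintype.card_fin]; ring
  -- hence T ≤ N * b k, and rigidity again: N * b k = T
  have hbT : ∀ k, N * b k = T := by
    apply mttr_rigid (fun k => N * b k) T
    · intro k
      have := hab k
      rwa [ha_eq k] at this
    · rw [← Finset.mul_sum, hsum_b, Fintype.card_fin, Nat.mul_comm]
  -- finish
  have h2 : N * T ≤ N * ∑ i ∈ Finset.range l, b (u (i : ZMod T)) :=
    Nat.mul_le_mul_left _ hcover
  have h3 : N * ∑ i ∈ Finset.range l, b (u (i : ZMod T))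
      = ∑ i ∈ Finset.range l, (N * b (u (i : ZMod T))) := Finset.mul_sum _ _ _
  have h4 : ∑ i ∈ Finset.range l, (N * b (u (i : ZMod T))) = l * T := by
    calc ∑ i ∈ Finset.range l, (N * b (u (i : ZMod T)))
        = ∑ _i ∈ Finset.range l, T := Finset.sum_congr rfl (fun i _ => hbT _)
      _ = l * T := by rw [Finset.sum_const, Finset.card_range, smul_eq_mul]
  have h5 : N * T ≤ l * T := by omega
  exact Nat.le_of_mul_le_mul_right h5 hT0
end

section
/- Let w : Fin N → Fin N be a bijection (a permutation of the N channels), and define s, r : ℤ/N²ℤ → Fin N by s(i) = w(i mod N) and r(i) = w(i div N) (where i ∈ [0,N²) and div/mod are with respect to N). Then for every shift τ ∈ [0,N²) and every channel k ∈ Fin N, there exists i ∈ [0,N²) with s(i+τ) = r(i) = k, and there exists j ∈ [0,N²) with r(j+τ) = s(j) = k (indices taken mod N²). -/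
theorem farch_even_maximal_rendezvous_diversity
    (N : ℕ) (hN : 0 < N) (w : Fin N → Fin N) (hw : Function.Bijective w)
    (s r : ZMod (N ^ 2) → Fin N)
    (hs : ∀ i : ℕ, s (i : ZMod (N ^ 2)) = w ⟨i % N, Nat.mod_lt _ hN⟩)
    (hr : ∀ i : ℕ, (hi : i < N ^ 2) →
      r (i : ZMod (N ^ 2)) = w ⟨i / N, Nat.div_lt_of_lt_mul (by nlinarith)⟩) :
    ∀ τ < N ^ 2, ∀ k : Fin N,
      (∃ i < N ^ 2, s ((i + τ : ℕ) : ZMod (N ^ 2)) = k ∧ r (i : ZMod (N ^ 2)) = k) ∧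
      (∃ j < N ^ 2, r ((j + τ : ℕ) : ZMod (N ^ 2)) = k ∧ s (j : ZMod (N ^ 2)) = k) := by
  intro τ hτ k
  obtain ⟨a, ha⟩ := hw.2 k
  have haN : (a : ℕ) < N := a.isLt
  have hsq : N ^ 2 = N * N := sq N
  have hNdvd : N ∣ N ^ 2 := ⟨N, hsq⟩
  have hN2 : 0 < N ^ 2 := by nlinarith
  set t := τ % N with htdef
  have ht : t < N := Nat.mod_lt _ hN
  constructor
  · -- sender-to-receiver
    set b := ((a : ℕ) + N - t) % N with hbdef
    have hb : b < N := Nat.mod_lt _ hN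
    refine ⟨(a : ℕ) * N + b, by nlinarith, ?_, ?_⟩
    · rw [hs, ← ha]
      congr 1
      apply Fin.eq_of_val_eq
      show ((a : ℕ) * N + b + τ) % N = (a : ℕ)
      have h1 : (a : ℕ) * N + b + τ ≡ 0 + b + t [MOD N] :=
        Nat.ModEq.add (Nat.ModEq.add ((Nat.modEq_zero_iff_dvd).mpr ⟨a, (mul_comm _ _)⟩) rfl)
          (Nat.mod_modEq τ N).symm
      have h2 : b + t ≡ ((a : ℕ) + N - t) + t [MOD N] :=
        Nat.ModEq.add (Nat.mod_modEq _ N) rfl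
      have h3 : (a : ℕ) + N - t + t = (a : ℕ) + N := by omega
      have h4 : (a : ℕ) + N ≡ (a : ℕ) [MOD N] := Nat.add_modEq_right
      have : (a : ℕ) * N + b + τ ≡ (a : ℕ) [MOD N] := by
        calc (a : ℕ) * N + b + τ ≡ 0 + b + t [MOD N] := h1
          _ = b + t := by ring
          _ ≡ (a : ℕ) + N - t + t [MOD N] := h2
          _ = (a : ℕ) + N := h3
          _ ≡ (a : ℕ) [MOD N] := h4
      exact Eq.trans this (Nat.mod_eq_of_lt haN)
    · have hi : (a : ℕ) * N + b < N ^ 2 := by nlinarith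
      rw [hr _ hi, ← ha]
      congr 1
      apply Fin.eq_of_val_eq
      show ((a : ℕ) * N + b) / N = (a : ℕ)
      rw [mul_comm, Nat.mul_add_div hN, Nat.div_eq_of_lt hb, Nat.add_zero]
  · -- receiver-to-sender
    set c := ((a : ℕ) + τ) % N with hcdef
    have hc : c < N := Nat.mod_lt _ hN
    set X := (a : ℕ) * N + c + N ^ 2 - τ with hXdef
    set j := X % N ^ 2 with hjdef
    have hj : j < N ^ 2 := Nat.mod_lt _ hN2
    have hXτ : X + τ = (a : ℕ) * N + c + N ^ 2 := by omega
    refine ⟨j, hj, ?_, ?_⟩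
    · have hmeq : j + τ ≡ (a : ℕ) * N + c [MOD N ^ 2] := by
        calc j + τ ≡ X + τ [MOD N ^ 2] := Nat.ModEq.add (Nat.mod_modEq _ _) rfl
          _ = (a : ℕ) * N + c + N ^ 2 := hXτ
          _ ≡ (a : ℕ) * N + c [MOD N ^ 2] := Nat.add_modEq_right
      have hcast : ((j + τ : ℕ) : ZMod (N ^ 2)) = (((a : ℕ) * N + c : ℕ) : ZMod (N ^ 2)) :=
        (ZMod.natCast_eq_natCast_iff _ _ _).mpr hmeq
      have hlt : (a : ℕ) * N + c < N ^ 2 := by nlinarith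
      rw [hcast, hr _ hlt, ← ha]
      congr 1
      apply Fin.eq_of_val_eq
      show ((a : ℕ) * N + c) / N = (a : ℕ)
      rw [mul_comm, Nat.mul_add_div hN, Nat.div_eq_of_lt hc, Nat.add_zero]
    · rw [hs, ← ha]
      congr 1
      apply Fin.eq_of_val_eq
      show j % N = (a : ℕ)
      have h1 : X + τ ≡ (a : ℕ) + τ [MOD N] := by
        calc X + τ = (a : ℕ) * N + c + N ^ 2 := hXτ
          _ ≡ 0 + ((a : ℕ) + τ) + 0 [MOD N] := by
              exact Nat.ModEq.add (Nat.ModEq.add ((Nat.modEq_zero_iff_dvd).mpr ⟨a, mul_comm _ _⟩)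
                (Nat.mod_modEq _ N)) ((Nat.modEq_zero_iff_dvd).mpr hNdvd)
          _ = (a : ℕ) + τ := by ring
      have h2 : X ≡ (a : ℕ) [MOD N] := Nat.ModEq.add_right_cancel' τ h1
      have h3 : j % N = X % N := Nat.mod_mod_of_dvd _ hNdvd
      rw [h3]
      exact Eq.trans h2 (Nat.mod_eq_of_lt haN)
end

section
/- Let w : Fin N → Fin N be a bijection, and define s, r : ℤ/N²ℤ → Fin N by s(i) = w(i mod N) and r(i) = w(i div N). Suppose for some τ ∈ [0,N²) and some i, i' ∈ [0,N²) with i < i' we have s(i+τ) = r(i) and s(i'+τ) = r(i') with r(i) = r(i') (same rendezvous channel within one period at the same offset). Then i = i'. Equivalently, for each τ and each channel k there is exactly one i ∈ [0,N²) with s(i+τ) = r(i) = k. -/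
theorem farch_rendezvous_unique
    (N : ℕ) (hN : 0 < N) (w : Fin N → Fin N) (hw : Function.Bijective w)
    (s r : ZMod (N ^ 2) → Fin N)
    (hs : ∀ i : ℕ, s (i : ZMod (N ^ 2)) = w ⟨i % N, Nat.mod_lt _ hN⟩)
    (hr : ∀ i : ℕ, (hi : i < N ^ 2) →
      r (i : ZMod (N ^ 2)) = w ⟨i / N, Nat.div_lt_of_lt_mul (by nlinarith)⟩)
    (τ i i' : ℕ) (hτ : τ < N ^ 2) (hi : i < N ^ 2) (hi' : i' < N ^ 2)
    (hren : s ((i + τ : ℕ) : ZMod (N ^ 2)) = r (i : ZMod (N ^ 2)))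
    (hren' : s ((i' + τ : ℕ) : ZMod (N ^ 2)) = r (i' : ZMod (N ^ 2)))
    (hsame : r (i : ZMod (N ^ 2)) = r (i' : ZMod (N ^ 2))) :
    i = i' := by
  have hinj := hw.injective
  rw [hs, hr i hi] at hren
  rw [hs, hr i' hi'] at hren'
  rw [hr i hi, hr i' hi'] at hsame
  have h1 : (i + τ) % N = i / N := Fin.mk.inj_iff.mp (hinj hren)
  have h2 : (i' + τ) % N = i' / N := Fin.mk.inj_iff.mp (hinj hren')
  have h3 : i / N = i' / N := Fin.mk.inj_iff.mp (hinj hsame)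
  have hmod : i % N = i' % N := by
    have : (i + τ) % N = (i' + τ) % N := by rw [h1, h2, h3]
    have := (Nat.ModEq.add_right_cancel' τ this)
    simpa [Nat.ModEq] using this
  calc i = N * (i / N) + i % N := (Nat.div_add_mod i N).symm
    _ = N * (i' / N) + i' % N := by rw [h3, hmod]
    _ = i' := Nat.div_add_mod i' N
end

section
/- Let N ≥ 2, let w : Fin N → Fin N be a bijection, and define s, r : ℤ/N²ℤ → Fin N by s(i) = w(i mod N), r(i) = w(i div N). Then for every shift τ ∈ [0,N²), there exists i < N with s(i+τ) = r(i) (indices mod N²); i.e., when the sender's clock is ahead, a rendezvous occurs within the first N slots of the receiver's sequence. -/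
theorem farch_sender_ahead_rendezvous_within_N
    (N : ℕ) (hN : 2 ≤ N) (w : Fin N → Fin N) (hw : Function.Bijective w)
    (s r : ZMod (N ^ 2) → Fin N)
    (hs : ∀ i : ℕ, s (i : ZMod (N ^ 2)) = w ⟨i % N, Nat.mod_lt _ (by omega)⟩)
    (hr : ∀ i : ℕ, (hi : i < N ^ 2) →
      r (i : ZMod (N ^ 2)) = w ⟨i / N, Nat.div_lt_of_lt_mul (by nlinarith)⟩) :
    ∀ τ < N ^ 2, ∃ i < N,
      s ((i + τ : ℕ) : ZMod (N ^ 2)) = r (i : ZMod (N ^ 2)) := by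
  intro τ hτ
  refine ⟨(N - τ % N) % N, Nat.mod_lt _ (by omega), ?_⟩
  rw [hs, hr _ (by have := Nat.mod_lt (N - τ % N) (show 0 < N by omega); nlinarith)]
  congr 1
  have hk := Nat.mod_lt τ (show 0 < N by omega)
  have h1 : ((N - τ % N) % N + τ) % N = 0 := by
    rcases Nat.eq_zero_or_pos (τ % N) with h | h
    · simp [h, Nat.add_mod, Nat.mod_self]
    · have h2 : (N - τ % N) % N = N - τ % N := Nat.mod_eq_of_lt (by omega)
      have h4 : N - τ % N + τ = N + N * (τ / N) := by
        have := Nat.mod_add_div τ N; omega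
      rw [h2, h4, Nat.add_mul_mod_self_left, Nat.mod_self]
  have h2 : (N - τ % N) % N / N = 0 := Nat.div_eq_of_lt (Nat.mod_lt _ (by omega))
  simp [h1, h2]
end

section
/- Let u, v : ℤ/Tℤ → Fin N with N ≥ 2 and suppose for every τ ∈ [0,T) and every k ∈ Fin N there exists i < N² with u(i) = k and v(i+τ) = k (MCTTR = N², so in particular v visits every channel exactly T/N times). Let 0 ≤ h ≤ N−2 and suppose l with 1 ≤ l ≤ T satisfies: for every τ ∈ [0,T) and every subset A ⊆ Fin N with |A| = N−h, there exists i < l and k ∈ A with u(i) = k and v(i+τ) = k. Then l ≥ (h+1)·N. -/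
open Finset

set_option maxHeartbeats 1000000 in
theorem mttr_h_lower_bound
    (N T l h : ℕ) (hN : 2 ≤ N) (hh : h ≤ N - 2) (hl1 : 1 ≤ l) (hlT : l ≤ T)
    (u v : ZMod T → Fin N)
    (hmcttr : ∀ τ < T, ∀ k : Fin N,
      ∃ i < N ^ 2, u (i : ZMod T) = k ∧ v ((i + τ : ℕ) : ZMod T) = k)
    (hmttrh : ∀ τ < T, ∀ A : Finset (Fin N), A.card = N - h →
      ∃ i < l, ∃ k ∈ A, u (i : ZMod T) = k ∧ v ((i + τ : ℕ) : ZMod T) = k) :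
    (h + 1) * N ≤ l := by
  classical
  have hT : 0 < T := lt_of_lt_of_le hl1 hlT
  haveI : NeZero T := ⟨hT.ne'⟩
  set m : Fin N → ℕ := fun k =>
    ((Finset.range (N^2)).filter (fun i : ℕ => u ((i : ℕ) : ZMod T) = k)).card with hm
  set n : Fin N → ℕ := fun k =>
    (Finset.univ.filter (fun x : ZMod T => v x = k)).card with hn
  have hcast : ∀ τ1 τ2 : ℕ, τ1 < T → τ2 < T → ((τ1 : ZMod T) = (τ2 : ZMod T)) → τ1 = τ2 := by
    intro a b ha hb hab
    have := congrArg ZMod.val hab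
    rwa [ZMod.val_natCast, ZMod.val_natCast, Nat.mod_eq_of_lt ha, Nat.mod_eq_of_lt hb] at this
  -- Key A: m k * n k ≥ T for each channel k
  have keyA : ∀ k : Fin N, T ≤ m k * n k := by
    intro k
    have h1 : ∀ τ ∈ Finset.range T, ∃ i : ℕ, i < N^2 ∧ u ((i : ℕ) : ZMod T) = k ∧
        v (((i+τ : ℕ)) : ZMod T) = k := by
      intro τ hτ
      obtain ⟨i, hi, h2, h3⟩ := hmcttr τ (Finset.mem_range.mp hτ) k
      exact ⟨i, hi, h2, h3⟩
    choose! f hf1 hf2 hf3 using h1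
    have hmap : ∀ τ ∈ Finset.range T,
        ((f τ, (((f τ + τ : ℕ)) : ZMod T)) : ℕ × ZMod T) ∈
          ((Finset.range (N^2)).filter (fun i : ℕ => u ((i : ℕ) : ZMod T) = k)) ×ˢ
          (Finset.univ.filter (fun x : ZMod T => v x = k)) := by
      intro τ hτ
      simp only [Finset.mem_product, Finset.mem_filter, Finset.mem_range, Finset.mem_univ, true_and]
      exact ⟨⟨hf1 τ hτ, hf2 τ hτ⟩, hf3 τ hτ⟩
    have hinj : Set.InjOn (fun τ : ℕ => ((f τ, (((f τ + τ : ℕ)) : ZMod T)) : ℕ × ZMod T))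
        (Finset.range T) := by
      intro a ha b hb hab
      simp only [Prod.mk.injEq] at hab
      obtain ⟨h1', h2'⟩ := hab
      rw [h1'] at h2'
      push_cast at h2'
      exact hcast a b (Finset.mem_range.mp ha) (Finset.mem_range.mp hb) (add_left_cancel h2')
    have := Finset.card_le_card_of_injOn _ hmap hinj
    simpa [Finset.card_product] using this
  have hsm : ∑ k : Fin N, m k = N^2 := by
    have := Finset.card_eq_sum_card_fiberwise
      (f := fun i : ℕ => u ((i : ℕ) : ZMod T)) (s := Finset.range (N^2)) (t := Finset.univ)
      (fun x _ => Finset.mem_univ _)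
    simpa [hm] using this.symm
  have hsn : ∑ k : Fin N, n k = T := by
    have := Finset.card_eq_sum_card_fiberwise
      (f := fun x : ZMod T => v x) (s := Finset.univ) (t := Finset.univ)
      (fun x _ => Finset.mem_univ _)
    have hc : (Finset.univ : Finset (ZMod T)).card = T := by
      simp [ZMod.card T]
    rw [hc] at this
    simpa [hn] using this.symm
  -- lower bound per channel on the weighted sum
  have hlow : ∀ j : Fin N, 2*(N*T) ≤ T * m j + N^2 * n j := by
    intro j
    have h1 : (N*T)*(N*T) ≤ (T * m j) * (N^2 * n j) := by nlinarith [keyA j]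
    have h1' : ((N:ℤ)*T)*((N:ℤ)*T) ≤ ((T:ℤ) * m j) * ((N:ℤ)^2 * n j) := by exact_mod_cast h1
    have ha : (0:ℤ) ≤ (T:ℤ) * m j := by positivity
    have hb : (0:ℤ) ≤ (N:ℤ)^2 * n j := by positivity
    have hc : (0:ℤ) ≤ (N:ℤ)*T := by positivity
    have : (2*((N:ℤ)*T)) ≤ (T:ℤ) * m j + (N:ℤ)^2 * n j := by
      nlinarith [sq_nonneg (((T:ℤ) * m j) - ((N:ℤ)^2 * n j)),
        sq_nonneg (((T:ℤ) * m j) + ((N:ℤ)^2 * n j) - 2*((N:ℤ)*T))]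
    exact_mod_cast this
  have hsumab : ∑ j : Fin N, (T * m j + N^2 * n j) = 2*(N^2*T) := by
    rw [Finset.sum_add_distrib, ← Finset.mul_sum, ← Finset.mul_sum, hsm, hsn]
    ring
  have hup : ∀ k : Fin N, T * m k + N^2 * n k ≤ 2*(N*T) := by
    intro k
    have h1 : T * m k + N^2 * n k + ∑ j ∈ Finset.univ.erase k, (T * m j + N^2 * n j)
        = 2*(N^2*T) := by
      rw [← hsumab]
      exact Finset.add_sum_erase Finset.univ (fun j => T * m j + N^2 * n j) (Finset.mem_univ k)
    have h2 : (Finset.univ.erase k).card • (2*(N*T)) ≤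
        ∑ j ∈ Finset.univ.erase k, (T * m j + N^2 * n j) :=
      Finset.card_nsmul_le_sum _ _ _ (fun j _ => hlow j)
    have hcard : (Finset.univ.erase k).card = N - 1 := by
      rw [Finset.card_erase_of_mem (Finset.mem_univ k)]
      simp
    obtain ⟨M, hM⟩ : ∃ M, N = M + 1 := ⟨N - 1, by omega⟩
    have hcard' : (Finset.univ.erase k).card = M := by omega
    rw [hcard', smul_eq_mul] at h2
    have e : M*(2*(N*T)) + 2*(N*T) = 2*(N^2*T) := by rw [hM]; ring
    omega
  -- uniform loading: N * n k = T
  have keyB : ∀ k : Fin N, N * n k = T := by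
    intro k
    have h1 : (N*T)*(N*T) ≤ (T * m k) * (N^2 * n k) := by nlinarith [keyA k]
    have h1' : ((N:ℤ)*T)*((N:ℤ)*T) ≤ ((T:ℤ) * m k) * ((N:ℤ)^2 * n k) := by exact_mod_cast h1
    have h2' : ((T:ℤ) * m k + (N:ℤ)^2 * n k) ≤ 2*((N:ℤ)*T) := by exact_mod_cast hup k
    have ha : (0:ℤ) ≤ (T:ℤ) * m k := by positivity
    have hb : (0:ℤ) ≤ (N:ℤ)^2 * n k := by positivity
    have hmul : ((N:ℤ)^2 * n k) * ((T:ℤ) * m k + (N:ℤ)^2 * n k) ≤ ((N:ℤ)^2 * n k) * (2*((N:ℤ)*T)) :=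
      mul_le_mul_of_nonneg_left h2' hb
    have hsq : (((N:ℤ)^2 * n k) - (N:ℤ)*T)^2 ≤ 0 := by nlinarith [hmul, h1']
    have hsq0 : (((N:ℤ)^2 * n k) - (N:ℤ)*T)^2 = 0 := le_antisymm hsq (sq_nonneg _)
    have hz0 : (((N:ℤ)^2 * n k) - (N:ℤ)*T) = 0 := by
      exact pow_eq_zero_iff (n := 2) (by norm_num) |>.mp hsq0
    have hz : ((N:ℤ)^2 * n k) = (N:ℤ)*T := by linarith
    have hnat : N^2 * n k = N*T := by exact_mod_cast hz
    have : N * (N * n k) = N * T := by rw [← hnat]; ring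
    exact Nat.eq_of_mul_eq_mul_left (by omega) this
  -- per-offset rendezvous count ≥ h+1
  have hcount : ∀ τ ∈ Finset.range T, h + 1 ≤
      ((Finset.range l).filter
        (fun i : ℕ => u ((i:ℕ):ZMod T) = v (((i+τ:ℕ)):ZMod T))).card := by
    intro τ hτ
    set F := (Finset.range l).filter
      (fun i : ℕ => u ((i:ℕ):ZMod T) = v (((i+τ:ℕ)):ZMod T)) with hF
    set R := F.image (fun i : ℕ => u ((i:ℕ):ZMod T)) with hR
    by_contra hcon
    push_neg at hcon
    have hRcard : R.card ≤ h := le_trans Finset.card_image_le (by omega)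
    have hcompl : N - h ≤ Rᶜ.card := by
      rw [Finset.card_compl]
      simp only [Fintype.card_fin]
      omega
    obtain ⟨A, hA1, hA2⟩ := Finset.exists_subset_card_eq (s := Rᶜ) (n := N-h) hcompl
    obtain ⟨i, hi, k, hk, h2, h3⟩ := hmttrh τ (Finset.mem_range.mp hτ) A hA2
    have hiF : i ∈ F := Finset.mem_filter.mpr ⟨Finset.mem_range.mpr hi, h2.trans h3.symm⟩
    have hkR : k ∈ R := Finset.mem_image.mpr ⟨i, hiF, h2⟩
    have := hA1 hk
    rw [Finset.mem_compl] at this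
    exact this hkR
  -- sum over offsets
  have hsum1 : T * (h+1) ≤
      ∑ τ ∈ Finset.range T,
        ((Finset.range l).filter
          (fun i : ℕ => u ((i:ℕ):ZMod T) = v (((i+τ:ℕ)):ZMod T))).card := by
    have := Finset.card_nsmul_le_sum (Finset.range T)
      (fun τ : ℕ => ((Finset.range l).filter
        (fun i : ℕ => u ((i:ℕ):ZMod T) = v (((i+τ:ℕ)):ZMod T))).card)
      (h+1) hcount
    simpa [smul_eq_mul] using this
  -- swap sums
  have hswap : ∑ τ ∈ Finset.range T,
      ((Finset.range l).filter
        (fun i : ℕ => u ((i:ℕ):ZMod T) = v (((i+τ:ℕ)):ZMod T))).card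
      = ∑ i ∈ Finset.range l,
        ((Finset.range T).filter
          (fun τ : ℕ => u ((i:ℕ):ZMod T) = v (((i+τ:ℕ)):ZMod T))).card := by
    simp only [Finset.card_filter]
    exact Finset.sum_comm
  -- inner count equals channel loading
  have hinner : ∀ i : ℕ,
      ((Finset.range T).filter
        (fun τ : ℕ => u ((i:ℕ):ZMod T) = v (((i+τ:ℕ)):ZMod T))).card
      = n (u ((i:ℕ):ZMod T)) := by
    intro i
    rw [hn]
    apply Finset.card_bij (fun (τ : ℕ) _ => (((i+τ:ℕ)) : ZMod T))
    · intro τ hτ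
      simp only [Finset.mem_filter, Finset.mem_range] at hτ
      simp only [Finset.mem_filter, Finset.mem_univ, true_and]
      exact hτ.2.symm
    · intro a ha b hb hab
      simp only [Finset.mem_filter, Finset.mem_range] at ha hb
      push_cast at hab
      exact hcast a b ha.1 hb.1 (add_left_cancel hab)
    · intro x hx
      simp only [Finset.mem_filter, Finset.mem_univ, true_and] at hx
      refine ⟨(x - ((i:ℕ):ZMod T)).val, ?_, ?_⟩
      · have hxeq : (((i + (x - ((i:ℕ):ZMod T)).val : ℕ)) : ZMod T) = x := by
          push_cast
          rw [ZMod.natCast_rightInverse (x - ((i:ℕ):ZMod T))]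
          ring
        simp only [Finset.mem_filter, Finset.mem_range]
        exact ⟨ZMod.val_lt _, by rw [hxeq]; exact hx.symm⟩
      · push_cast
        rw [ZMod.natCast_rightInverse (x - ((i:ℕ):ZMod T))]
        ring
  -- final computation
  have hfin : T * (h+1) ≤ ∑ i ∈ Finset.range l, n (u ((i:ℕ):ZMod T)) := by
    rw [← Finset.sum_congr rfl (fun i _ => hinner i), ← hswap]
    exact hsum1
  have hNsum : N * ∑ i ∈ Finset.range l, n (u ((i:ℕ):ZMod T)) = l * T := by
    rw [Finset.mul_sum, Finset.sum_congr rfl (fun i _ => keyB (u ((i:ℕ):ZMod T)))]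
    simp [Finset.sum_const, mul_comm]
  have hmain : N * (T * (h+1)) ≤ l * T :=
    le_trans (Nat.mul_le_mul_left N hfin) (le_of_eq hNsum)
  have hmain' : (h+1) * N * T ≤ l * T := by
    calc (h+1) * N * T = N * (T * (h+1)) := by ring
    _ ≤ l * T := hmain
  exact Nat.le_of_mul_le_mul_right hmain' hT
end

section
/- Let y : Fin N → ℕ with y(k) ≥ 1 for all k, and let T = ∑_k y(k). Suppose x : Fin N → ℕ satisfies x(k) · y(k) ≥ T for every k. Then ∑_k x(k) ≥ N². -/
theorem visit_counts_sum_sq_lower_bound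
    (N : ℕ) (y x : Fin N → ℕ)
    (hy : ∀ k, 1 ≤ y k)
    (hx : ∀ k, (∑ j, y j) ≤ x k * y k) :
    N ^ 2 ≤ ∑ k, x k := by
  have hyR : ∀ k, (0:ℝ) < (y k : ℝ) := fun k => by exact_mod_cast hy k
  set T : ℝ := ∑ j, (y j : ℝ) with hT
  have hxk : ∀ k, T / (y k : ℝ) ≤ (x k : ℝ) := by
    intro k
    rw [div_le_iff₀ (hyR k)]
    have := hx k
    have : ((∑ j, y j : ℕ) : ℝ) ≤ ((x k * y k : ℕ) : ℝ) := by exact_mod_cast this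
    simpa [hT] using this
  have cs : ((N:ℝ))^2 ≤ (∑ k, 1 / (y k : ℝ)) * T := by
    have := Finset.sum_sq_le_sum_mul_sum_of_sq_eq_mul (Finset.univ : Finset (Fin N))
      (r := fun _ => (1:ℝ)) (f := fun k => 1 / (y k : ℝ)) (g := fun k => (y k : ℝ))
      (fun i _ => by positivity) (fun i _ => (hyR i).le)
      (fun i _ => by simp [div_mul_cancel₀, (hyR i).ne'])
    simpa [hT] using this
  have h2 : (∑ k, 1 / (y k : ℝ)) * T = ∑ k, T / (y k : ℝ) := by
    rw [Finset.sum_mul]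
    exact Finset.sum_congr rfl fun k _ => by ring
  have h3 : ((N:ℝ))^2 ≤ ∑ k, (x k : ℝ) := by
    refine (cs.trans_eq h2).trans (Finset.sum_le_sum fun k _ => hxk k)
  exact_mod_cast h3
end

section
/- Let y : Fin N → ℕ with y(k) ≥ 1, T = ∑_k y(k), and x : Fin N → ℕ with x(k)·y(k) ≥ T for all k. If ∑_k x(k) = N², then y is constant: y(k) = y(k') for all k, k'. -/
lemma pair_ineq (a b : ℚ) (ha : 0 < a) (hb : 0 < b) :
    2 ≤ a / b + b / a := by
  rw [div_add_div _ _ (ne_of_gt hb) (ne_of_gt ha), le_div_iff₀ (by positivity)]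
  nlinarith [sq_nonneg (a - b)]

lemma pair_strict (a b : ℚ) (ha : 0 < a) (hb : 0 < b) (hne : a ≠ b) :
    2 < a / b + b / a := by
  rw [div_add_div _ _ (ne_of_gt hb) (ne_of_gt ha), lt_div_iff₀ (by positivity)]
  nlinarith [sq_pos_of_ne_zero (sub_ne_zero.mpr hne)]

theorem visit_counts_equality_case
    (N : ℕ) (y x : Fin N → ℕ)
    (hy : ∀ k, 1 ≤ y k)
    (hx : ∀ k, (∑ j, y j) ≤ x k * y k)
    (hsum : ∑ k, x k = N ^ 2) :
    ∀ k k', y k = y k' := by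
  by_contra h
  push_neg at h
  obtain ⟨a, b, hab⟩ := h
  have hypos : ∀ k, (0 : ℚ) < (y k : ℚ) := fun k => by
    exact_mod_cast Nat.lt_of_lt_of_le Nat.zero_lt_one (hy k)
  -- x k ≥ T / y k in ℚ
  have hxk : ∀ k, (∑ j, (y j : ℚ)) / (y k : ℚ) ≤ (x k : ℚ) := by
    intro k
    rw [div_le_iff₀ (hypos k)]
    have := hx k
    push_cast
    exact_mod_cast this
  -- symmetrized double sum
  set f : Fin N × Fin N → ℚ := fun p => ((y p.1 : ℚ) / y p.2 + (y p.2 : ℚ) / y p.1) / 2 with hf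
  have h1 : ∀ p : Fin N × Fin N, p ∈ Finset.univ → (1 : ℚ) ≤ f p := by
    intro p _
    have := pair_ineq (y p.1) (y p.2) (hypos p.1) (hypos p.2)
    simp only [hf]; linarith
  have hstrict : (1 : ℚ) < f (a, b) := by
    have := pair_strict (y a) (y b) (hypos a) (hypos b) (by exact_mod_cast hab)
    simp only [hf]; linarith
  have hlt : ((N : ℚ))^2 < ∑ p : Fin N × Fin N, f p := by
    have := Finset.sum_lt_sum h1 ⟨(a, b), Finset.mem_univ _, hstrict⟩
    have hcard : ∑ _p : Fin N × Fin N, (1 : ℚ) = (N : ℚ)^2 := by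
      simp [sq]
    linarith [hcard ▸ this]
  -- the symmetrized sum equals the double sum ∑_{j,k} y j / y k
  have hsym : ∑ p : Fin N × Fin N, f p = ∑ j, ∑ k, (y j : ℚ) / y k := by
    rw [← Finset.sum_product']
    have : ∑ p : Fin N × Fin N, ((y p.2 : ℚ) / y p.1) = ∑ p : Fin N × Fin N, ((y p.1 : ℚ) / y p.2) := by
      exact Finset.sum_equiv (Equiv.prodComm _ _) (by simp) (by simp)
    simp only [hf, ← add_div, ← Finset.sum_div, Finset.sum_add_distrib, this]
    rw [Finset.univ_product_univ]
    ring
  -- double sum ≤ ∑ x = N²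
  have hle : ∑ j, ∑ k, (y j : ℚ) / y k ≤ ((N : ℚ))^2 := by
    have : ∑ k, (∑ j, (y j : ℚ)) / (y k : ℚ) ≤ ∑ k, (x k : ℚ) :=
      Finset.sum_le_sum fun k _ => hxk k
    have hxs : ∑ k, (x k : ℚ) = (N : ℚ)^2 := by exact_mod_cast hsum
    calc ∑ j, ∑ k, (y j : ℚ) / y k = ∑ k, (∑ j, (y j : ℚ)) / (y k : ℚ) := by
          rw [Finset.sum_comm]; simp [Finset.sum_div]
      _ ≤ (N : ℚ)^2 := by rw [← hxs]; exact this
  linarith [hsym ▸ hlt]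
end

section
/- Let N ≥ 2, T ≥ 1, and u, v : ℤ/Tℤ → Fin N. Define for each τ ∈ [0,T) and each k the count H(τ,k) = |{i ∈ [0,T) : u(i) = k ∧ v(i+τ) = k}|. If H(τ,k) ≥ 1 for all τ and all k, then T ≥ N². -/
theorem maximal_rendezvous_diversity_period_lower_bound
    (N T : ℕ) (hN : 2 ≤ N) (hT : 1 ≤ T)
    (u v : ZMod T → Fin N)
    (hren : ∀ τ < T, ∀ k : Fin N,
      1 ≤ ((Finset.range T).filter
        (fun (i : ℕ) => u (i : ZMod T) = k ∧ v ((i + τ : ℕ) : ZMod T) = k)).card) :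
    N ^ 2 ≤ T := by
  classical
  set x : Fin N → ℕ := fun k => ((Finset.range T).filter (fun (i : ℕ) => u (i : ZMod T) = k)).card with hx
  set y : Fin N → ℕ := fun k => ((Finset.range T).filter (fun (i : ℕ) => v (i : ZMod T) = k)).card with hy
  have hT0 : 0 < T := hT
  have key : ∀ k : Fin N, T ≤ x k * y k := by
    intro k
    have h1 : T ≤ ∑ τ ∈ Finset.range T, ((Finset.range T).filter
        (fun (i : ℕ) => u (i : ZMod T) = k ∧ v ((i + τ : ℕ) : ZMod T) = k)).card := by
      calc T = ∑ _τ ∈ Finset.range T, 1 := by simp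
      _ ≤ _ := Finset.sum_le_sum fun τ hτ => hren τ (Finset.mem_range.mp hτ) k
    have h2 : ∑ τ ∈ Finset.range T, ((Finset.range T).filter
        (fun (i : ℕ) => u (i : ZMod T) = k ∧ v ((i + τ : ℕ) : ZMod T) = k)).card
        ≤ x k * y k := by
      rw [← Finset.card_sigma]
      rw [hx, hy, ← Finset.card_product]
      apply Finset.card_le_card_of_injOn
        (fun p => (p.2, (p.2 + p.1) % T))
      · rintro ⟨τ, i⟩ hp
        simp only [Finset.mem_coe, Finset.mem_sigma, Finset.mem_filter, Finset.mem_range] at hp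
        obtain ⟨hτ, ⟨hi, hu, hv⟩⟩ := hp
        simp only [Finset.mem_coe, Finset.mem_product, Finset.mem_filter, Finset.mem_range]
        refine ⟨⟨hi, hu⟩, Nat.mod_lt _ hT0, ?_⟩
        rwa [ZMod.natCast_mod]
      · rintro ⟨τ₁, i₁⟩ h₁ ⟨τ₂, i₂⟩ h₂ heq
        simp only [Finset.mem_coe, Finset.mem_sigma, Finset.mem_filter, Finset.mem_range] at h₁ h₂
        simp only [Prod.mk.injEq] at heq
        obtain ⟨hi, hm⟩ := heq
        subst hi
        have : τ₁ % T = τ₂ % T := by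
          have h : (i₁ + τ₁) % T = (i₁ + τ₂) % T := hm
          have := (Nat.ModEq.add_left_cancel' i₁ h)
          exact this
        have hτ : τ₁ = τ₂ := by
          rwa [Nat.mod_eq_of_lt h₁.1, Nat.mod_eq_of_lt h₂.1] at this
        simp [hτ]
    exact h1.trans h2
  have hsx : ∑ k : Fin N, x k = T := by
    simp only [hx]
    have h := Finset.card_eq_sum_card_fiberwise
      (s := Finset.range T) (t := Finset.univ)
      (f := fun (i : ℕ) => u (i : ZMod T)) (fun i _ => Finset.mem_univ _)
    rw [Finset.card_range] at h
    exact h.symm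
  have hsy : ∑ k : Fin N, y k = T := by
    simp only [hy]
    have h := Finset.card_eq_sum_card_fiberwise
      (s := Finset.range T) (t := Finset.univ)
      (f := fun (i : ℕ) => v (i : ZMod T)) (fun i _ => Finset.mem_univ _)
    rw [Finset.card_range] at h
    exact h.symm
  -- real part
  set a : Fin N → ℝ := fun k => Real.sqrt (x k)
  set b : Fin N → ℝ := fun k => Real.sqrt (y k)
  have hab : ∀ k, Real.sqrt T ≤ a k * b k := by
    intro k
    have : Real.sqrt T ≤ Real.sqrt ((x k : ℝ) * y k) := by
      apply Real.sqrt_le_sqrt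
      exact_mod_cast key k
    rwa [Real.sqrt_mul (by positivity)] at this
  have hsum : (N : ℝ) * Real.sqrt T ≤ ∑ k : Fin N, a k * b k := by
    calc (N : ℝ) * Real.sqrt T = ∑ _k : Fin N, Real.sqrt T := by
          simp [mul_comm]
      _ ≤ _ := Finset.sum_le_sum fun k _ => hab k
  have hcs : (∑ k : Fin N, a k * b k) ^ 2 ≤
      (∑ k : Fin N, a k ^ 2) * ∑ k : Fin N, b k ^ 2 :=
    Finset.sum_mul_sq_le_sq_mul_sq _ _ _
  have ha2 : ∑ k : Fin N, a k ^ 2 = (T : ℝ) := by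
    have h : ∀ k : Fin N, a k ^ 2 = (x k : ℝ) := fun k => Real.sq_sqrt (Nat.cast_nonneg _)
    rw [Finset.sum_congr rfl fun k _ => h k, ← Nat.cast_sum, hsx]
  have hb2 : ∑ k : Fin N, b k ^ 2 = (T : ℝ) := by
    have h : ∀ k : Fin N, b k ^ 2 = (y k : ℝ) := fun k => Real.sq_sqrt (Nat.cast_nonneg _)
    rw [Finset.sum_congr rfl fun k _ => h k, ← Nat.cast_sum, hsy]
  have hfin : ((N : ℝ) * Real.sqrt T) ^ 2 ≤ (T : ℝ) * T := by
    calc ((N : ℝ) * Real.sqrt T) ^ 2 ≤ (∑ k : Fin N, a k * b k) ^ 2 := by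
          apply pow_le_pow_left₀ (by positivity) hsum
      _ ≤ _ := hcs
      _ = (T : ℝ) * T := by rw [ha2, hb2]
  have hsq : ((N : ℝ)) ^ 2 * T ≤ (T : ℝ) * T := by
    have : ((N : ℝ) * Real.sqrt T) ^ 2 = (N : ℝ) ^ 2 * T := by
      rw [mul_pow, Real.sq_sqrt (by positivity)]
    linarith [hfin, this.symm.le]
  have : ((N : ℝ)) ^ 2 ≤ T := by
    have hTpos : (0 : ℝ) < T := by exact_mod_cast hT0
    nlinarith
  exact_mod_cast this
end

section
/- For any N ≥ 2 and any function u : ℤ/Tℤ → Fin N with T ≥ 1, if there exist channels k ≠ k' with |{i : u(i) = k}| ≠ |{i : u(i) = k'}|, then for any v : ℤ/Tℤ → Fin N, the pair (u,v) cannot satisfy: for all τ ∈ [0,T) and all channels c, there exists i < N² with v(i) = c and u(i+τ) = c. -/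
open Finset

private lemma two_le_div_add_div' {x y : ℝ} (hx : 0 < x) (hy : 0 < y) :
    2 ≤ x / y + y / x := by
  rw [div_add_div _ _ hy.ne' hx.ne', le_div_iff₀ (by positivity)]
  nlinarith [sq_nonneg (x - y)]

private lemma two_lt_div_add_div' {x y : ℝ} (hx : 0 < x) (hy : 0 < y) (hxy : x ≠ y) :
    2 < x / y + y / x := by
  rw [div_add_div _ _ hy.ne' hx.ne', lt_div_iff₀ (by positivity)]
  nlinarith [sq_pos_of_ne_zero (sub_ne_zero.mpr hxy)]

private lemma card_filter_range_cast' (T : ℕ) [NeZero T] (P : ZMod T → Prop)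
    [DecidablePred P] :
    ((Finset.range T).filter (fun i : ℕ => P (i : ZMod T))).card
      = (Finset.univ.filter P).card := by
  refine Finset.card_bij' (fun i _ => ((i : ZMod T))) (fun z _ => z.val) ?_ ?_ ?_ ?_
  · intro a ha
    simp only [mem_filter, mem_range] at ha ⊢
    exact ⟨mem_univ _, ha.2⟩
  · intro z hz
    simp only [mem_filter, mem_univ, true_and] at hz
    simp only [mem_filter, mem_range]
    constructor
    · exact ZMod.val_lt z
    · rw [ZMod.natCast_rightInverse z]; exact hz
  · intro a ha
    simp only [mem_filter, mem_range] at ha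
    exact ZMod.val_cast_of_lt ha.1
  · intro z _
    exact ZMod.natCast_rightInverse z

theorem nonuniform_loading_no_min_mcttr
    (N T : ℕ) (hN : 2 ≤ N) (hT : 1 ≤ T)
    (u : ZMod T → Fin N)
    (hnonunif : ∃ k k' : Fin N, k ≠ k' ∧
      ((Finset.range T).filter (fun (i : ℕ) => u (i : ZMod T) = k)).card ≠
      ((Finset.range T).filter (fun (i : ℕ) => u (i : ZMod T) = k')).card) :
    ∀ v : ZMod T → Fin N,
      ¬ (∀ τ < T, ∀ c : Fin N,
        ∃ i < N ^ 2, v (i : ZMod T) = c ∧ u ((i + τ : ℕ) : ZMod T) = c) := by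
  intro v hpair
  haveI : NeZero T := ⟨by omega⟩
  obtain ⟨k, k', hkk', hb⟩ := hnonunif
  -- the channel-load counts
  set b : Fin N → ℕ := fun c => (Finset.univ.filter (fun z : ZMod T => u z = c)).card with hbdef
  set a : Fin N → ℕ := fun c =>
    ((Finset.range (N ^ 2)).filter (fun i : ℕ => v (i : ZMod T) = c)).card with hadef
  have hbcast : ∀ c : Fin N,
      ((Finset.range T).filter (fun i : ℕ => u (i : ZMod T) = c)).card = b c := fun c =>
    card_filter_range_cast' T (fun z => u z = c)
  have hbk : b k ≠ b k' := by rw [← hbcast k, ← hbcast k']; exact hb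
  -- sum of a over channels is N^2
  have hsuma : ∑ c : Fin N, a c = N ^ 2 := by
    rw [hadef]
    rw [← Finset.card_eq_sum_card_fiberwise (f := fun i : ℕ => v (i : ZMod T))
      (s := Finset.range (N ^ 2)) (t := Finset.univ) (fun x _ => mem_univ _),
      Finset.card_range]
  -- sum of b over channels is T
  have hsumb : ∑ c : Fin N, b c = T := by
    rw [hbdef]
    rw [← Finset.card_eq_sum_card_fiberwise (f := u) (s := Finset.univ)
      (t := Finset.univ) (fun x _ => mem_univ _)]
    simp [ZMod.card]
  -- key counting bound : T ≤ a c * b c for every channel c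
  have hkey : ∀ c : Fin N, T ≤ a c * b c := by
    intro c
    have H : ∀ τ ∈ Finset.range T, ∃ i, i < N ^ 2 ∧ v (i : ZMod T) = c ∧
        u ((i + τ : ℕ) : ZMod T) = c := by
      intro τ hτ
      obtain ⟨i, hi, h1, h2⟩ := hpair τ (mem_range.mp hτ) c
      exact ⟨i, hi, h1, h2⟩
    classical
    choose! f hf1 hf2 hf3 using H
    have hcard := Finset.card_le_mul_card_image (f := f) (Finset.range T) (b c) ?_
    · have himage : ((Finset.range T).image f).card ≤ a c := by
        apply Finset.card_le_card
        intro i hi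
        obtain ⟨τ, hτ, rfl⟩ := Finset.mem_image.mp hi
        simp only [hadef, mem_filter, mem_range]
        exact ⟨hf1 τ hτ, hf2 τ hτ⟩
      calc T = (Finset.range T).card := (Finset.card_range T).symm
        _ ≤ b c * ((Finset.range T).image f).card := hcard
        _ ≤ b c * a c := Nat.mul_le_mul_left _ himage
        _ = a c * b c := Nat.mul_comm _ _
    · intro i _
      have hsub : (Finset.range T).filter (fun τ => f τ = i) ⊆
          (Finset.range T).filter (fun τ : ℕ => u (((i : ZMod T)) + (τ : ZMod T)) = c) := by
        intro τ hτ
        simp only [mem_filter, mem_range] at hτ ⊢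
        refine ⟨hτ.1, ?_⟩
        have := hf3 τ (mem_range.mpr hτ.1)
        rw [hτ.2] at this
        rwa [Nat.cast_add] at this
      refine le_trans (Finset.card_le_card hsub) ?_
      have := card_filter_range_cast' T (fun z : ZMod T => u ((i : ZMod T) + z) = c)
      rw [this]
      -- translation invariance of the count
      have : (Finset.univ.filter (fun z : ZMod T => u ((i : ZMod T) + z) = c)).card
          = (Finset.univ.filter (fun z : ZMod T => u z = c)).card := by
        refine Finset.card_bij' (fun z _ => (i : ZMod T) + z) (fun z _ => z - (i : ZMod T))
          ?_ ?_ ?_ ?_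
        · intro z hz; simpa using (Finset.mem_filter.mp hz).2
        · intro z hz
          simp only [mem_filter, mem_univ, true_and] at hz ⊢
          simpa using hz
        · intro z _; ring
        · intro z _; ring
      rw [this]
  -- positivity of b
  have hbpos : ∀ c : Fin N, 0 < b c := by
    intro c
    by_contra h
    have h0 : b c = 0 := by omega
    have h1 := hkey c
    rw [h0, Nat.mul_zero] at h1
    omega
  -- move to the reals
  set B : Fin N → ℝ := fun c => (b c : ℝ) with hBdef
  have hBpos : ∀ c, 0 < B c := fun c => by
    simp only [hBdef]; exact_mod_cast hbpos c
  have hA : ∀ c : Fin N, (T : ℝ) / B c ≤ (a c : ℝ) := by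
    intro c
    rw [div_le_iff₀ (hBpos c)]
    simp only [hBdef]
    exact_mod_cast hkey c
  have hsum1 : (T : ℝ) * ∑ c : Fin N, 1 / B c ≤ (N : ℝ) ^ 2 := by
    calc (T : ℝ) * ∑ c : Fin N, 1 / B c = ∑ c : Fin N, (T : ℝ) / B c := by
          rw [Finset.mul_sum]; congr 1; funext c; ring
      _ ≤ ∑ c : Fin N, (a c : ℝ) := Finset.sum_le_sum (fun c _ => hA c)
      _ = (N : ℝ) ^ 2 := by rw [← Nat.cast_sum, hsuma]; push_cast; ring
  -- strict AM-HM (Cauchy-Schwarz) inequality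
  have hsumB : ∑ c : Fin N, B c = (T : ℝ) := by
    simp only [hBdef]
    rw [← Nat.cast_sum, hsumb]
  have hCS : (N : ℝ) ^ 2 < (∑ c : Fin N, B c) * ∑ c : Fin N, 1 / B c := by
    have h1 : (∑ c : Fin N, B c) * ∑ c : Fin N, 1 / B c
        = ∑ p : Fin N × Fin N, B p.1 / B p.2 := by
      rw [Fintype.sum_mul_sum, Fintype.sum_prod_type]
      exact Finset.sum_congr rfl fun i _ => Finset.sum_congr rfl fun j _ => mul_one_div _ _
    have h2 : ∑ p : Fin N × Fin N, B p.1 / B p.2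
        = ∑ p : Fin N × Fin N, B p.2 / B p.1 :=
      Fintype.sum_equiv (Equiv.prodComm (Fin N) (Fin N)) _ _ (fun p => rfl)
    have h3 : 2 * ((∑ c : Fin N, B c) * ∑ c : Fin N, 1 / B c)
        = ∑ p : Fin N × Fin N, (B p.1 / B p.2 + B p.2 / B p.1) := by
      rw [two_mul, h1]
      nth_rewrite 2 [h2]
      rw [← Finset.sum_add_distrib]
    have h4 : ∑ _p : Fin N × Fin N, (2 : ℝ)
        < ∑ p : Fin N × Fin N, (B p.1 / B p.2 + B p.2 / B p.1) := by
      refine Finset.sum_lt_sum (fun p _ => two_le_div_add_div' (hBpos p.1) (hBpos p.2)) ?_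
      refine ⟨(k, k'), Finset.mem_univ _, ?_⟩
      exact two_lt_div_add_div' (hBpos k) (hBpos k')
        (by simp only [hBdef]; exact_mod_cast hbk)
    have h5 : ∑ _p : Fin N × Fin N, (2 : ℝ) = 2 * (N : ℝ) ^ 2 := by
      rw [Finset.sum_const]
      simp [Fintype.card_prod]
      ring
    rw [h5, ← h3] at h4
    linarith
  rw [hsumB] at hCS
  linarith
end
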